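/- In VB_n, for 2 ≤ i < j ≤ n the following conjugating rules hold: ρ_{i−1} λ_{ij} ρ_{i−1} = λ_{i−1,j} and ρ_{i−1} λ_{ji} ρ_{i−1} = λ_{j,i−1}. -/

import Mathlib

/-- Generators of the virtual braid group `VB n`:
`Sum.inl i` is the braid generator σ_{i+1} and `Sum.inr i` is the virtual
generator ρ_{i+1} (0-based index `i : Fin (n-1)`, paper indices are 1-based). -/
abbrev VBGen (n : ℕ) := Fin (n - 1) ⊕ Fin (n - 1)

/-- σ-letter in the free group. -/
def fS {n : ℕ} (i : Fin (n - 1)) : FreeGroup (VBGen n) := FreeGroup.of (Sum.inl i)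

/-- ρ-letter in the free group. -/
def fR {n : ℕ} (i : Fin (n - 1)) : FreeGroup (VBGen n) := FreeGroup.of (Sum.inr i)

/-- The defining relators of the virtual braid group `VB_n`. -/
def vbRels (n : ℕ) : Set (FreeGroup (VBGen n)) :=
  {r | (∃ i j : Fin (n - 1), (i : ℕ) + 1 = (j : ℕ) ∧
          r = fS i * fS j * fS i * (fS j * fS i * fS j)⁻¹) ∨
       (∃ i j : Fin (n - 1), (i : ℕ) + 2 ≤ (j : ℕ) ∧
          r = fS i * fS j * (fS j * fS i)⁻¹) ∨
       (∃ i j : Fin (n - 1), (i : ℕ) + 1 = (j : ℕ) ∧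
          r = fR i * fR j * fR i * (fR j * fR i * fR j)⁻¹) ∨
       (∃ i j : Fin (n - 1), (i : ℕ) + 2 ≤ (j : ℕ) ∧
          r = fR i * fR j * (fR j * fR i)⁻¹) ∨
       (∃ i : Fin (n - 1), r = fR i * fR i) ∨
       (∃ i j : Fin (n - 1), ((i : ℕ) + 2 ≤ (j : ℕ) ∨ (j : ℕ) + 2 ≤ (i : ℕ)) ∧
          r = fS i * fR j * (fR j * fS i)⁻¹) ∨
       (∃ i j : Fin (n - 1), (i : ℕ) + 1 = (j : ℕ) ∧
          r = fR i * fR j * fS i * (fS j * fR i * fR j)⁻¹)}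

/-- The virtual braid group `VB_n` as a presented group. -/
abbrev VB (n : ℕ) := PresentedGroup (vbRels n)

/-- The generator σ_i of `VB n`, with the paper's 1-based index `1 ≤ i ≤ n-1`
(junk value `1` outside that range). -/
def sig {n : ℕ} (i : ℕ) : VB n :=
  if h : 1 ≤ i ∧ i ≤ n - 1 then PresentedGroup.of (Sum.inl ⟨i - 1, by omega⟩) else 1

/-- The generator ρ_i of `VB n`, with the paper's 1-based index. -/
def rho {n : ℕ} (i : ℕ) : VB n :=
  if h : 1 ≤ i ∧ i ≤ n - 1 then PresentedGroup.of (Sum.inr ⟨i - 1, by omega⟩) else 1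

/-- The ascending product ρ_a ρ_{a+1} ⋯ ρ_b (equal to `1` if `a > b`). -/
def asc {n : ℕ} (a b : ℕ) : VB n := ((List.range' a (b + 1 - a)).map (rho (n := n))).prod

/-- The descending product ρ_b ρ_{b-1} ⋯ ρ_a (equal to `1` if `a > b`). -/
def desc {n : ℕ} (a b : ℕ) : VB n :=
  (((List.range' a (b + 1 - a)).map (rho (n := n))).reverse).prod

/-- λ_{k l} for 1-based indices `k ≠ l`:
for `k < l`, λ_{k l} = ρ_{l-1} ⋯ ρ_{k+1} (ρ_k σ_k⁻¹) ρ_{k+1} ⋯ ρ_{l-1};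
for `l < k`, λ_{k l} = ρ_{k-1} ⋯ ρ_{l+1} (σ_l⁻¹ ρ_l) ρ_{l+1} ⋯ ρ_{k-1}. -/
def lam {n : ℕ} (k l : ℕ) : VB n :=
  if k < l then desc (k + 1) (l - 1) * (rho k * (sig k)⁻¹) * asc (k + 1) (l - 1)
  else desc (l + 1) (k - 1) * ((sig l)⁻¹ * rho l) * asc (l + 1) (k - 1)

/-- `ν : VB_n → S_n` is characterized by sending both σ_i and ρ_i to the
transposition (i, i+1). -/
def IsNu {n : ℕ} (ν : VB n →* Equiv.Perm (Fin n)) : Prop :=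
  ∀ i : Fin (n - 1),
    ν (PresentedGroup.of (Sum.inl i)) =
      Equiv.swap ⟨(i : ℕ), by have := i.isLt; omega⟩ ⟨(i : ℕ) + 1, by have := i.isLt; omega⟩ ∧
    ν (PresentedGroup.of (Sum.inr i)) =
      Equiv.swap ⟨(i : ℕ), by have := i.isLt; omega⟩ ⟨(i : ℕ) + 1, by have := i.isLt; omega⟩

/-- The subgroup of `VB n` generated by the ρ-generators (a copy of `S_n`). -/
def Rsub (n : ℕ) : Subgroup (VB n) :=
  Subgroup.closure (Set.range fun i : Fin (n - 1) => (PresentedGroup.of (Sum.inr i) : VB n))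

/-- The subgroup of `VB n` generated by the λ_{k l} with `1 ≤ k ≠ l ≤ m`;
for `m = n` this is the virtual pure braid group `VP_n`, and in general it is
the canonical copy of `VP_m` inside `VP_n`. -/
def VPsub (n : ℕ) (m : ℕ) : Subgroup (VB n) :=
  Subgroup.closure {x | ∃ k l : ℕ, 1 ≤ k ∧ k ≤ m ∧ 1 ≤ l ∧ l ≤ m ∧ k ≠ l ∧ x = lam k l}

/-- `V_i^*`: the normal closure, inside the copy of `VP_{i+1}`, of the subgroup
`V_i = ⟨λ_{k,i+1}, λ_{i+1,k} : 1 ≤ k ≤ i⟩`. -/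
def Vstar (n : ℕ) (i : ℕ) : Subgroup (VB n) :=
  Subgroup.closure {x | ∃ g ∈ VPsub n (i + 1), ∃ k : ℕ, 1 ≤ k ∧ k ≤ i ∧
    (x = g⁻¹ * lam k (i + 1) * g ∨ x = g⁻¹ * lam (i + 1) k * g)}

/-! The mixed relation `ρ_k ρ_{k+1} σ_k = σ_{k+1} ρ_k ρ_{k+1}` for the involutions `ρ_k, ρ_{k+1}`
says `ρ_k σ_{k+1} ρ_k = ρ_{k+1} σ_k ρ_{k+1}`; with the braid relation `ρ_k ρ_{k+1} ρ_k =
ρ_{k+1} ρ_k ρ_{k+1}` this gives `ρ_k λ_{k+1,k+2} ρ_k = ρ_{k+1} λ_{k,k+1} ρ_{k+1}` and likewise for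
`λ_{k+2,k+1}`. The outer factors `ρ_{k+2}, …, ρ_{j-1}` of `λ_{k+1,j}` and `λ_{j,k+1}` commute with
`ρ_k`, and the right-hand sides are `λ_{k,j}` and `λ_{j,k}` with their innermost `ρ_{k+1}` peeled
off. -/

section Involution

variable {G : Type*} [Group G] {x : G}

theorem conj_mul_of_mul_self_eq_one (hx : x * x = 1) (g h : G) :
    x * (g * h) * x = (x * g * x) * (x * h * x) := by
  rw [show x * g * x * (x * h * x) = x * g * (x * x) * h * x by group, hx]
  group

theorem conj_inv_of_mul_self_eq_one (hx : x * x = 1) (g : G) :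
    x * g⁻¹ * x = (x * g * x)⁻¹ := by
  have hxinv : x⁻¹ = x := inv_eq_of_mul_eq_one_right hx
  rw [mul_inv_rev, mul_inv_rev, hxinv, mul_assoc]

theorem conj_eq_conj_of_mul_mul_eq {a b s t : G} (ha : a * a = 1) (hb : b * b = 1)
    (h : a * b * s = t * a * b) : a * t * a = b * s * b := by
  calc a * t * a = a * (t * a * b) * (b * a) * a := by
          rw [show a * (t * a * b) * (b * a) * a = a * t * a * (b * b) * (a * a) by group, hb, ha]
          group
    _ = b * s * b := by
          rw [← h, show a * (a * b * s) * (b * a) * a = (a * a) * b * s * b * (a * a) by group, ha]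
          group

theorem conj_mul_mul_of_commute {D A : G} (hx : x * x = 1) (hD : Commute x D)
    (hA : Commute x A) (g : G) : x * (D * g * A) * x = D * (x * g * x) * A := by
  rw [conj_mul_of_mul_self_eq_one hx, conj_mul_of_mul_self_eq_one hx, hD.eq, hA.eq,
    mul_assoc D, hx, mul_one, mul_assoc A, hx, mul_one]

end Involution

section Relations

variable {n : ℕ}

theorem mk_eq_one_of_mem_vbRels {r : FreeGroup (VBGen n)} (h : r ∈ vbRels n) :
    (QuotientGroup.mk r : VB n) = 1 :=
  (QuotientGroup.eq_one_iff r).mpr (Subgroup.subset_normalClosure h)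

theorem mk_eq_mk_of_mul_inv_mem_vbRels {a b : FreeGroup (VBGen n)} (h : a * b⁻¹ ∈ vbRels n) :
    (QuotientGroup.mk a : VB n) = QuotientGroup.mk b := by
  have h1 := mk_eq_one_of_mem_vbRels h
  rw [QuotientGroup.mk_mul, QuotientGroup.mk_inv] at h1
  exact mul_inv_eq_one.mp h1

theorem rho_eq_mk {i : ℕ} (h1 : 1 ≤ i) (h2 : i ≤ n - 1) :
    (rho i : VB n) = QuotientGroup.mk (fR ⟨i - 1, by omega⟩) := by
  rw [rho, dif_pos ⟨h1, h2⟩]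
  rfl

theorem sig_eq_mk {i : ℕ} (h1 : 1 ≤ i) (h2 : i ≤ n - 1) :
    (sig i : VB n) = QuotientGroup.mk (fS ⟨i - 1, by omega⟩) := by
  rw [sig, dif_pos ⟨h1, h2⟩]
  rfl

theorem rho_eq_one {i : ℕ} (h : ¬(1 ≤ i ∧ i ≤ n - 1)) : (rho i : VB n) = 1 := by
  rw [rho, dif_neg h]

theorem rho_mul_self (i : ℕ) : (rho i : VB n) * rho i = 1 := by
  by_cases h : 1 ≤ i ∧ i ≤ n - 1
  · rw [rho_eq_mk h.1 h.2]
    exact mk_eq_one_of_mem_vbRels (Or.inr (Or.inr (Or.inr (Or.inr (Or.inl ⟨_, rfl⟩)))))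
  · rw [rho_eq_one h, one_mul]

theorem rho_braid {i : ℕ} (h1 : 1 ≤ i) (h2 : i + 1 ≤ n - 1) :
    (rho i : VB n) * rho (i + 1) * rho i = rho (i + 1) * rho i * rho (i + 1) := by
  rw [rho_eq_mk h1 (by omega), rho_eq_mk (by omega) h2]
  exact mk_eq_mk_of_mul_inv_mem_vbRels (Or.inr (Or.inr (Or.inl
    ⟨⟨i - 1, by omega⟩, ⟨i + 1 - 1, by omega⟩, by dsimp only; omega, rfl⟩)))

theorem rho_commute {i j : ℕ} (h1 : 1 ≤ i) (h2 : i + 2 ≤ j) :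
    Commute (rho i : VB n) (rho j) := by
  by_cases hj : j ≤ n - 1
  · rw [Commute, SemiconjBy, rho_eq_mk h1 (by omega), rho_eq_mk (by omega) hj]
    exact mk_eq_mk_of_mul_inv_mem_vbRels (Or.inr (Or.inr (Or.inr (Or.inl
      ⟨⟨i - 1, by omega⟩, ⟨j - 1, by omega⟩, by dsimp only; omega, rfl⟩))))
  · rw [rho_eq_one (i := j) (by omega)]
    exact Commute.one_right _

theorem rho_mul_rho_mul_sig {i : ℕ} (h1 : 1 ≤ i) (h2 : i + 1 ≤ n - 1) :
    (rho i : VB n) * rho (i + 1) * sig i = sig (i + 1) * rho i * rho (i + 1) := by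
  rw [rho_eq_mk h1 (by omega), rho_eq_mk (by omega) h2, sig_eq_mk h1 (by omega),
    sig_eq_mk (by omega) h2]
  exact mk_eq_mk_of_mul_inv_mem_vbRels (Or.inr (Or.inr (Or.inr (Or.inr (Or.inr (Or.inr
    ⟨⟨i - 1, by omega⟩, ⟨i + 1 - 1, by omega⟩, by dsimp only; omega, rfl⟩))))))

theorem rho_mul_sig_succ_mul_rho {i : ℕ} (h1 : 1 ≤ i) (h2 : i + 1 ≤ n - 1) :
    (rho i : VB n) * sig (i + 1) * rho i = rho (i + 1) * sig i * rho (i + 1) :=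
  conj_eq_conj_of_mul_mul_eq (rho_mul_self i) (rho_mul_self (i + 1)) (rho_mul_rho_mul_sig h1 h2)

end Relations

section Lambda

variable {n : ℕ}

theorem asc_eq_rho_mul {a b : ℕ} (h : a ≤ b) : (asc a b : VB n) = rho a * asc (a + 1) b := by
  rw [asc, asc, show b + 1 - a = b + 1 - (a + 1) + 1 by omega, List.range'_succ,
    List.map_cons, List.prod_cons]

theorem desc_eq_mul_rho {a b : ℕ} (h : a ≤ b) : (desc a b : VB n) = desc (a + 1) b * rho a := by
  rw [desc, desc, show b + 1 - a = b + 1 - (a + 1) + 1 by omega, List.range'_succ,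
    List.map_cons, List.reverse_cons, List.prod_append, List.prod_singleton]

theorem commute_rho_asc {k a : ℕ} (hk : 1 ≤ k) (ha : k + 2 ≤ a) (b : ℕ) :
    Commute (rho k : VB n) (asc a b) := by
  refine Commute.list_prod_right _ _ fun y hy => ?_
  obtain ⟨l, hl, rfl⟩ := List.mem_map.mp hy
  exact rho_commute hk (ha.trans (List.mem_range'_1.mp hl).1)

theorem commute_rho_desc {k a : ℕ} (hk : 1 ≤ k) (ha : k + 2 ≤ a) (b : ℕ) :
    Commute (rho k : VB n) (desc a b) := by
  refine Commute.list_prod_right _ _ fun y hy => ?_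
  obtain ⟨l, hl, rfl⟩ := List.mem_map.mp (List.mem_reverse.mp hy)
  exact rho_commute hk (ha.trans (List.mem_range'_1.mp hl).1)

theorem lam_of_lt {k l : ℕ} (h : k < l) :
    (lam k l : VB n) = desc (k + 1) (l - 1) * (rho k * (sig k)⁻¹) * asc (k + 1) (l - 1) :=
  if_pos h

theorem lam_of_gt {k l : ℕ} (h : l < k) :
    (lam k l : VB n) = desc (l + 1) (k - 1) * ((sig l)⁻¹ * rho l) * asc (l + 1) (k - 1) :=
  if_neg (Nat.lt_asymm h)

theorem lam_of_succ_lt {k l : ℕ} (h : k + 1 < l) :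
    (lam k l : VB n) =
      desc (k + 2) (l - 1) * (rho (k + 1) * (rho k * (sig k)⁻¹) * rho (k + 1)) *
        asc (k + 2) (l - 1) := by
  rw [lam_of_lt (by omega), desc_eq_mul_rho (by omega), asc_eq_rho_mul (by omega)]
  group

theorem lam_of_lt_pred {k l : ℕ} (h : k + 1 < l) :
    (lam l k : VB n) =
      desc (k + 2) (l - 1) * (rho (k + 1) * ((sig k)⁻¹ * rho k) * rho (k + 1)) *
        asc (k + 2) (l - 1) := by
  rw [lam_of_gt (by omega), desc_eq_mul_rho (by omega), asc_eq_rho_mul (by omega)]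
  group

theorem rho_conj_rho_succ_mul_sig_succ_inv {k : ℕ} (h1 : 1 ≤ k) (h2 : k + 1 ≤ n - 1) :
    (rho k : VB n) * (rho (k + 1) * (sig (k + 1))⁻¹) * rho k =
      rho (k + 1) * (rho k * (sig k)⁻¹) * rho (k + 1) := by
  rw [conj_mul_of_mul_self_eq_one (rho_mul_self k), conj_inv_of_mul_self_eq_one (rho_mul_self k),
    rho_braid h1 h2, rho_mul_sig_succ_mul_rho h1 h2,
    ← conj_inv_of_mul_self_eq_one (rho_mul_self (k + 1)),
    ← conj_mul_of_mul_self_eq_one (rho_mul_self (k + 1))]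

theorem rho_conj_sig_succ_inv_mul_rho_succ {k : ℕ} (h1 : 1 ≤ k) (h2 : k + 1 ≤ n - 1) :
    (rho k : VB n) * ((sig (k + 1))⁻¹ * rho (k + 1)) * rho k =
      rho (k + 1) * ((sig k)⁻¹ * rho k) * rho (k + 1) := by
  rw [conj_mul_of_mul_self_eq_one (rho_mul_self k), conj_inv_of_mul_self_eq_one (rho_mul_self k),
    rho_braid h1 h2, rho_mul_sig_succ_mul_rho h1 h2,
    ← conj_inv_of_mul_self_eq_one (rho_mul_self (k + 1)),
    ← conj_mul_of_mul_self_eq_one (rho_mul_self (k + 1))]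

theorem rho_conj_lam_succ_left {k j : ℕ} (hk : 1 ≤ k) (hkj : k + 1 < j) (hj : j ≤ n) :
    (rho k : VB n) * lam (k + 1) j * rho k = lam k j := by
  rw [lam_of_lt hkj, lam_of_succ_lt hkj,
    conj_mul_mul_of_commute (rho_mul_self k) (commute_rho_desc hk le_rfl _)
      (commute_rho_asc hk le_rfl _),
    rho_conj_rho_succ_mul_sig_succ_inv hk (by omega)]

theorem rho_conj_lam_succ_right {k j : ℕ} (hk : 1 ≤ k) (hkj : k + 1 < j) (hj : j ≤ n) :
    (rho k : VB n) * lam j (k + 1) * rho k = lam j k := by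
  rw [lam_of_gt hkj, lam_of_lt_pred hkj,
    conj_mul_mul_of_commute (rho_mul_self k) (commute_rho_desc hk le_rfl _)
      (commute_rho_asc hk le_rfl _),
    rho_conj_sig_succ_inv_mul_rho_succ hk (by omega)]

end Lambda

theorem stmt_3_general (n : ℕ) (i j : ℕ) (hi : 2 ≤ i) (hij : i < j) (hj : j ≤ n) :
    (rho (i - 1) * lam i j * rho (i - 1) : VB n) = lam (i - 1) j ∧
    (rho (i - 1) * lam j i * rho (i - 1) : VB n) = lam j (i - 1) := by
  obtain ⟨k, rfl⟩ : ∃ k, i = k + 1 := ⟨i - 1, by omega⟩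
  rw [Nat.add_sub_cancel]
  exact ⟨rho_conj_lam_succ_left (by omega) hij hj, rho_conj_lam_succ_right (by omega) hij hj⟩

/-- for 2 ≤ i < j ≤ n, ρ_{i-1} λ_{ij} ρ_{i-1} = λ_{i-1,j} and
ρ_{i-1} λ_{ji} ρ_{i-1} = λ_{j,i-1}. -/
theorem stmt_3 (n : ℕ) (hn : 2 ≤ n) (i j : ℕ) (hi : 2 ≤ i) (hij : i < j) (hj : j ≤ n) :
    (rho (i - 1) * lam i j * rho (i - 1) : VB n) = lam (i - 1) j ∧
    (rho (i - 1) * lam j i * rho (i - 1) : VB n) = lam j (i - 1) :=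
  stmt_3_general n i j hi hij hj
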